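/- Let n ≥ 1. The uniform average over A ∈ 𝒜ₙ of the rank-one projector onto the complex equatorial stabilizer state equals the maximally mixed state: (1/|𝒜ₙ|) Σ_{A ∈ 𝒜ₙ} φ^{eq}_A (φ^{eq}_A)† = (1/2ⁿ)·I, where I is the 2ⁿ×2ⁿ identity matrix and |𝒜ₙ| = 2^{(n²+3n)/2}. -/

import Mathlib

open Finset Matrix

/-- Bit strings of length `n`, with entries viewed as `0/1` integers via `Fin 2`. -/
abbrev Bits (n : ℕ) := Fin n → Fin 2

open Classical in
/-- The index set `𝒜ₙ`: symmetric `n × n` matrices with diagonal entries in `{0,1,2,3}`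
and off-diagonal entries in `{0,1}` (encoded inside `Fin 4`). -/
noncomputable def An (n : ℕ) : Finset (Matrix (Fin n) (Fin n) (Fin 4)) :=
  Finset.univ.filter fun A => (∀ i j, A i j = A j i) ∧ ∀ i j, i ≠ j → (A i j : ℕ) < 2

/-- The quadratic form `xᵀ A x`, computed in `ℤ` (here in `ℕ`, with `0/1` entries of `x`). -/
def quadA {n : ℕ} (A : Matrix (Fin n) (Fin n) (Fin 4)) (x : Bits n) : ℕ :=
  ∑ i, ∑ j, (A i j : ℕ) * (x i : ℕ) * (x j : ℕ)

/-- The complex equatorial stabilizer state `φ^{eq}_A`, with components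
`φ^{eq}_A(x) = 2^{-n/2} i^{xᵀAx}`. -/
noncomputable def phiEq {n : ℕ} (A : Matrix (Fin n) (Fin n) (Fin 4)) (x : Bits n) : ℂ :=
  Complex.I ^ quadA A x / (Real.sqrt (2 ^ n) : ℂ)

/-- The rank-one projector `φ φ†` onto a vector `φ`. -/
noncomputable def outer {ι : Type*} (φ : ι → ℂ) : Matrix ι ι ℂ :=
  Matrix.of fun x y => φ x * (starRingEnd ℂ) (φ y)

/-! The `(x, y)` entry of the sum is `2⁻ⁿ ∑_A i^(xᵀAx) · conj (i^(yᵀAy))`. On the diagonal every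
term is `1`. Off the diagonal pick `i` with `xᵢ ≠ yᵢ`: adding `1` (mod 4) to the diagonal entry
`A i i` permutes `𝒜ₙ` and multiplies each term by `i^(xᵢ) · conj (i^(yᵢ)) = ±i ≠ 1`, so the sum
vanishes. -/

open Complex ComplexConjugate

theorem pow_eq_pow_of_natCast_eq {M : Type*} [Monoid M] {g : M} {k : ℕ}
    (hg : g ^ k = 1) {a b : ℕ} (h : (a : ZMod k) = b) : g ^ a = g ^ b := by
  rw [pow_eq_pow_mod a hg, pow_eq_pow_mod b hg, (ZMod.natCast_eq_natCast_iff a b k).mp h]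

variable {n : ℕ}

theorem add_diagonal_mem_An_iff (A : Matrix (Fin n) (Fin n) (Fin 4)) (d : Fin n → Fin 4) :
    A + diagonal d ∈ An n ↔ A ∈ An n := by
  have hsymm : ∀ i j, (A + diagonal d) i j = (A + diagonal d) j i ↔ A i j = A j i := by
    intro i j
    rcases eq_or_ne i j with rfl | hij
    · simp
    · simp [diagonal_apply_ne d hij, diagonal_apply_ne d hij.symm]
  have hoff : ∀ i j, i ≠ j → (A + diagonal d) i j = A i j := fun i j hij => by
    simp [diagonal_apply_ne d hij]
  simp only [An, mem_filter, mem_univ, true_and, hsymm]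
  exact and_congr_right fun _ => forall₂_congr fun i j => imp_congr_right fun hij => by
    rw [hoff i j hij]

theorem natCast_quadA_add_diagonal (A : Matrix (Fin n) (Fin n) (Fin 4)) (d : Fin n → Fin 4)
    (x : Bits n) :
    (quadA (A + diagonal d) x : ZMod 4) = (quadA A x + ∑ i, (d i : ℕ) * x i * x i : ℕ) := by
  simp only [quadA, Nat.cast_sum, Nat.cast_mul, Nat.cast_add, Matrix.add_apply, Fin.val_add,
    ZMod.natCast_mod, add_mul, sum_add_distrib]
  congr 1
  simp [diagonal_apply, apply_ite, ite_mul]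

theorem I_pow_quadA_add_diagonal (A : Matrix (Fin n) (Fin n) (Fin 4)) (d : Fin n → Fin 4)
    (x : Bits n) :
    I ^ quadA (A + diagonal d) x = I ^ quadA A x * I ^ ∑ i, (d i : ℕ) * x i * x i := by
  rw [← pow_add]
  exact pow_eq_pow_of_natCast_eq I_pow_four (natCast_quadA_add_diagonal A d x)

theorem sum_An_I_pow_quadA_mul_conj_of_ne {x y : Bits n} (hxy : x ≠ y) :
    ∑ A ∈ An n, I ^ quadA A x * conj (I ^ quadA A y) = 0 := by
  obtain ⟨i, hi⟩ := Function.ne_iff.mp hxy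
  have hd : ∀ z : Bits n, ∑ j, ((Pi.single i 1 : Fin n → Fin 4) j : ℕ) * z j * z j
      = (z i : ℕ) * z i := fun z => by
    rw [Fintype.sum_eq_single i fun j hj => by simp [hj]]
    simp
  have hw : I ^ ((x i : ℕ) * x i) * conj (I ^ ((y i : ℕ) * y i)) ≠ 1 := by
    revert hi
    generalize x i = a
    generalize y i = b
    fin_cases a <;> fin_cases b <;> simp [Complex.ext_iff]
  set w := I ^ ((x i : ℕ) * x i) * conj (I ^ ((y i : ℕ) * y i))
  set S := ∑ A ∈ An n, I ^ quadA A x * conj (I ^ quadA A y)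
  have hshift : w * S = S := by
    rw [mul_sum]
    refine sum_equiv (Equiv.addRight (diagonal (Pi.single i 1))) (fun A => ?_) (fun A _ => ?_)
    · exact (add_diagonal_mem_An_iff A _).symm
    · rw [Equiv.coe_addRight, I_pow_quadA_add_diagonal, I_pow_quadA_add_diagonal, hd, hd,
        map_mul]
      ring
  by_contra hS
  exact hw ((mul_eq_right₀ hS).mp hshift)

theorem phiEq_mul_conj (A : Matrix (Fin n) (Fin n) (Fin 4)) (x y : Bits n) :
    phiEq A x * conj (phiEq A y) = I ^ quadA A x * conj (I ^ quadA A y) / 2 ^ n := by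
  unfold phiEq
  rw [map_div₀, div_mul_div_comm, conj_ofReal, ← ofReal_mul,
    Real.mul_self_sqrt (by positivity)]
  push_cast
  rfl

theorem zero_mem_An : (0 : Matrix (Fin n) (Fin n) (Fin 4)) ∈ An n := by
  simp [An]

theorem espovm_first_moment (n : ℕ) :
    (((An n).card : ℂ))⁻¹ • ∑ A ∈ An n, outer (phiEq A) =
      ((2 : ℂ) ^ n)⁻¹ • (1 : Matrix (Bits n) (Bits n) ℂ) := by
  ext x y
  simp only [Matrix.smul_apply, Matrix.sum_apply, outer, of_apply, one_apply, smul_eq_mul,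
    phiEq_mul_conj, ← sum_div]
  rcases eq_or_ne x y with rfl | hxy
  · have hcard : ((An n).card : ℂ) ≠ 0 := by exact_mod_cast (card_pos.mpr ⟨0, zero_mem_An⟩).ne'
    simp only [mul_conj, normSq_eq_norm_sq, norm_pow, norm_I, one_pow, ofReal_one, sum_const,
      nsmul_eq_mul, mul_one, if_true]
    field_simp
  · rw [sum_An_I_pow_quadA_mul_conj_of_ne hxy]
    simp [hxy]
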